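/- arXiv:2001.00971 — 5 statements merged into one kernel-verified Lean document; each statement's English description precedes it below -/
import Mathlib

section
/- Let $H$ be a real inner product space, $L : H \to H$ linear, and $u, u_h : [0,\infty) \to H$ differentiable with $u'(t) = L u(t)$ and $u_h'(t) = L_h u_h(t)$, where $L_h : V_h \to V_h$ is linear on a subspace $V_h \subseteq H$ and satisfies $\langle L_h v, v \rangle \le \mu \|v\|^2$ for all $v \in V_h$. Suppose there is a linear map $\Pi$ into $V_h$ and constants $E_T, E_S \ge 0$ with $\|(I - \Pi) L u(t)\| \le E_T$ and $|\langle (L - L_h \Pi) u(t), v \rangle| \le E_S \|v\|$ for all $v \in V_h$ and all $t$. Then with $\xi(t) = \Pi u(t) - u_h(t)$, one has $\frac{d}{dt} \|\xi(t)\| \le \mu \|\xi(t)\| + E_T + E_S$ wherever $\xi(t) \ne 0$, and consequently $\|\xi(t)\| \le e^{\mu t} \|\xi(0)\| + \sigma(\mu, t)(E_T + E_S)$ where $\sigma(\mu,t) = (e^{\mu t} - 1)/\mu$ for $\mu > 0$ and $\sigma(0,t) = t$. -/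
open scoped RealInnerProductSpace

/-- `σ(a,t) = (e^{at}-1)/a` for `a > 0`, and `σ(0,t) = t`. -/
noncomputable def sigma (a t : ℝ) : ℝ := if 0 < a then (Real.exp (a * t) - 1) / a else t

/-!
The error `ξ = Π u - u_h` lies in `V_h` and solves `ξ' = L_h ξ + d`, where the defect
`d = (Π - I) L u + (L - L_h Π) u` pairs with `v ∈ V_h` to at most `(E_T + E_S) ‖v‖`. Pairing with
`ξ` and using the one-sided bound on `L_h` gives `⟪ξ, ξ'⟫ ≤ (μ ‖ξ‖ + E_T + E_S) ‖ξ‖`, i.e. the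
differential inequality for `‖ξ‖`; where `ξ = 0`, pairing with `ξ'` gives `‖ξ'‖ ≤ E_T + E_S`
instead. Grönwall's inequality for the right derivative of `‖ξ‖` then yields the bound.
-/

open Set

section NormDeriv

variable {E : Type*} [NormedAddCommGroup E] [InnerProductSpace ℝ E]
  {f : ℝ → E} {f' : E} {s : Set ℝ} {x : ℝ}

theorem HasDerivWithinAt.norm (hf : HasDerivWithinAt f f' s x) (h0 : f x ≠ 0) :
    HasDerivWithinAt (‖f ·‖) (⟪f x, f'⟫ / ‖f x‖) s x := by
  have hsqrt := hf.norm_sq.sqrt (by positivity)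
  simp only [Real.sqrt_sq (norm_nonneg _)] at hsqrt
  convert hsqrt using 1
  have : ‖f x‖ ≠ 0 := norm_ne_zero_iff.mpr h0
  field_simp

theorem HasDerivAt.norm (hf : HasDerivAt f f' x) (h0 : f x ≠ 0) :
    HasDerivAt (‖f ·‖) (⟪f x, f'⟫ / ‖f x‖) x :=
  hasDerivWithinAt_univ.mp (hf.hasDerivWithinAt.norm h0)

end NormDeriv

/-- At zeros of `f` the norm is not differentiable; there its right derivative is `‖f'‖`,
whence `bound_zero`. -/
theorem norm_le_gronwallBound_of_inner_deriv_right_le {E : Type*} [NormedAddCommGroup E]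
    [InnerProductSpace ℝ E] {f f' : ℝ → E} {δ K ε a b : ℝ}
    (hf : ContinuousOn f (Icc a b)) (hf' : ∀ x ∈ Ico a b, HasDerivWithinAt f (f' x) (Ici x) x)
    (ha : ‖f a‖ ≤ δ)
    (bound : ∀ x ∈ Ico a b, ⟪f x, f' x⟫ ≤ (K * ‖f x‖ + ε) * ‖f x‖)
    (bound_zero : ∀ x ∈ Ico a b, f x = 0 → ‖f' x‖ ≤ ε) :
    ∀ x ∈ Icc a b, ‖f x‖ ≤ gronwallBound δ K ε (x - a) := by
  refine le_gronwallBound_of_liminf_deriv_right_le (f' := fun x => K * ‖f x‖ + ε)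
    (continuous_norm.comp_continuousOn hf) (fun x hx r hr => ?_) ha (fun _ _ => le_rfl)
  by_cases h0 : f x = 0
  · refine (hf' x hx).liminf_right_slope_norm_le ((bound_zero x hx h0).trans_lt ?_)
    simpa [h0] using hr
  · have hlt : ⟪f x, f' x⟫ / ‖f x‖ < r :=
      (div_le_iff₀ (norm_pos_iff.mpr h0)).mpr (bound x hx) |>.trans_lt hr
    simpa only [slope_def_field, inv_mul_eq_div] using
      ((hf' x hx).norm h0).liminf_right_slope_le hlt

theorem gronwallBound_eq_exp_mul_add_sigma {K : ℝ} (hK : 0 ≤ K) (δ ε t : ℝ) :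
    gronwallBound δ K ε t = Real.exp (K * t) * δ + sigma K t * ε := by
  rcases hK.lt_or_eq with hK | rfl
  · rw [gronwallBound_of_K_ne_0 hK.ne', sigma, if_pos hK]
    ring
  · rw [gronwallBound_K0, sigma, if_neg (lt_irrefl 0), zero_mul, Real.exp_zero, one_mul,
      mul_comm]

section Semidiscrete

variable {H : Type*} [NormedAddCommGroup H] [InnerProductSpace ℝ H]

/-- `Π L u - L_h u_h = L_h (Π u - u_h) + (Π - I) L u + (L - L_h Π) u`. -/
theorem inner_deriv_le_of_consistency {L Lh P : H →L[ℝ] H} {x y v : H} {ET ES : ℝ}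
    (hT : ‖L x - P (L x)‖ ≤ ET) (hS : |⟪L x - Lh (P x), v⟫| ≤ ES * ‖v‖) :
    ⟪P (L x) - Lh y, v⟫ ≤ ⟪Lh (P x - y), v⟫ + (ET + ES) * ‖v‖ := by
  have hsplit : P (L x) - Lh y = Lh (P x - y) + (P (L x) - L x) + (L x - Lh (P x)) := by
    rw [map_sub]
    abel
  have hTv : ⟪P (L x) - L x, v⟫ ≤ ET * ‖v‖ :=
    (real_inner_le_norm _ _).trans
      (mul_le_mul_of_nonneg_right (norm_sub_rev (L x) _ ▸ hT) (norm_nonneg v))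
  rw [hsplit, inner_add_left, inner_add_left]
  linarith [le_abs_self ⟪L x - Lh (P x), v⟫]

variable {Vh : Submodule ℝ H} {Lh : H →L[ℝ] H} {μ ε : ℝ} {ξ w : H}

theorem inner_le_mul_norm_of_dissipative (hsb : ∀ v ∈ Vh, ⟪Lh v, v⟫ ≤ μ * ‖v‖ ^ 2) (hξ : ξ ∈ Vh)
    (hw : ∀ v ∈ Vh, ⟪w, v⟫ ≤ ⟪Lh ξ, v⟫ + ε * ‖v‖) :
    ⟪ξ, w⟫ ≤ (μ * ‖ξ‖ + ε) * ‖ξ‖ := by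
  rw [real_inner_comm]
  linarith [hw ξ hξ, hsb ξ hξ]

theorem norm_le_of_inner_self_le (hε : 0 ≤ ε) (hw : ⟪w, w⟫ ≤ ε * ‖w‖) : ‖w‖ ≤ ε := by
  rw [real_inner_self_eq_norm_mul_norm] at hw
  rcases (norm_nonneg w).eq_or_lt with h | h
  · rw [← h]
    exact hε
  · exact le_of_mul_le_mul_right hw h

end Semidiscrete

/-- Error estimate for the semidiscrete scheme `∂ₜ u_h = L_h u_h` approximating
`∂ₜ u = L u`, with `ξ(t) = Π u(t) - u_h(t)`. -/
theorem semidiscrete_error_estimate {H : Type*} [NormedAddCommGroup H]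
    [InnerProductSpace ℝ H]
    (Vh : Submodule ℝ H) (L Lh P : H →L[ℝ] H) (μ ET ES : ℝ)
    (hμ : 0 ≤ μ) (hET : 0 ≤ ET) (hES : 0 ≤ ES)
    (hP : ∀ w : H, P w ∈ Vh)
    (hLhV : ∀ v ∈ Vh, Lh v ∈ Vh)
    (hsb : ∀ v ∈ Vh, ⟪Lh v, v⟫ ≤ μ * ‖v‖ ^ 2)
    (u uh : ℝ → H)
    (hu : ∀ t ≥ (0:ℝ), HasDerivAt u (L (u t)) t)
    (huh : ∀ t ≥ (0:ℝ), HasDerivAt uh (Lh (uh t)) t)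
    (huhV : ∀ t ≥ (0:ℝ), uh t ∈ Vh)
    (hT : ∀ t ≥ (0:ℝ), ‖L (u t) - P (L (u t))‖ ≤ ET)
    (hS : ∀ t ≥ (0:ℝ), ∀ v ∈ Vh, |⟪L (u t) - Lh (P (u t)), v⟫| ≤ ES * ‖v‖) :
    (∀ t ≥ (0:ℝ), P (u t) - uh t ≠ 0 →
        deriv (fun s => ‖P (u s) - uh s‖) t ≤ μ * ‖P (u t) - uh t‖ + ET + ES) ∧
    (∀ t ≥ (0:ℝ), ‖P (u t) - uh t‖ ≤
        Real.exp (μ * t) * ‖P (u 0) - uh 0‖ + sigma μ t * (ET + ES)) := by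
  set ξ : ℝ → H := fun t => P (u t) - uh t
  set ξ' : ℝ → H := fun t => P (L (u t)) - Lh (uh t)
  have hξ : ∀ t ≥ (0:ℝ), HasDerivAt ξ (ξ' t) t := fun t ht =>
    (P.hasFDerivAt.comp_hasDerivAt t (hu t ht)).sub (huh t ht)
  have hξV : ∀ t ≥ (0:ℝ), ξ t ∈ Vh := fun t ht => Vh.sub_mem (hP _) (huhV t ht)
  have hξ'V : ∀ t ≥ (0:ℝ), ξ' t ∈ Vh := fun t ht => Vh.sub_mem (hP _) (hLhV _ (huhV t ht))
  have hcons : ∀ t ≥ (0:ℝ), ∀ v ∈ Vh, ⟪ξ' t, v⟫ ≤ ⟪Lh (ξ t), v⟫ + (ET + ES) * ‖v‖ :=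
    fun t ht v hv => inner_deriv_le_of_consistency (hT t ht) (hS t ht v hv)
  have hbound : ∀ t ≥ (0:ℝ), ⟪ξ t, ξ' t⟫ ≤ (μ * ‖ξ t‖ + (ET + ES)) * ‖ξ t‖ := fun t ht =>
    inner_le_mul_norm_of_dissipative hsb (hξV t ht) (hcons t ht)
  have hzero : ∀ t ≥ (0:ℝ), ξ t = 0 → ‖ξ' t‖ ≤ ET + ES := fun t ht h0 =>
    norm_le_of_inner_self_le (add_nonneg hET hES) (by simpa [h0] using hcons t ht _ (hξ'V t ht))
  refine ⟨fun t ht h0 => ?_, fun t ht => ?_⟩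
  · rw [((hξ t ht).norm h0).deriv, div_le_iff₀ (norm_pos_iff.mpr h0), add_assoc]
    exact hbound t ht
  · have hgron := norm_le_gronwallBound_of_inner_deriv_right_le
      (fun s hs => (hξ s hs.1).continuousAt.continuousWithinAt)
      (fun s hs => (hξ s hs.1).hasDerivWithinAt) le_rfl
      (fun s hs => hbound s hs.1) (fun s hs => hzero s hs.1) t ⟨ht, le_rfl⟩
    rwa [sub_zero, gronwallBound_eq_exp_mul_add_sigma hμ] at hgron
end

section
/- For any $z_h$ in the mean-zero subspace $Z_h = \{v_h \in V_h : \langle v_h, 1 \rangle = 0\}$ of the periodic DG space and any $\theta \ne \tfrac12$, one has $\|z_h\|^2 = -\langle D_{h,\theta} z_h, \Pi_{1-\theta} \zeta_z \rangle$, where $\zeta_z(x) = \int_{x_{1/2}}^{x} z_h(s)\,ds$ and $\Pi_{1-\theta}$ is the Gauss–Radau-type projection satisfying $D_{h,1-\theta}\Pi_{1-\theta} w = \Pi_0 \partial_x w$ for periodic absolutely continuous $w$. -/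
open Polynomial

/-!
Summing the two variational identities, the volume terms integrate `∂ₓ (w v)` over each cell,
and the fluxes `θ`, `1 - θ` are exactly complementary, so each node contributes the jump of
`w v`. Around the periodic mesh these telescope to zero, giving `D_{h,θ}ᵀ = -D_{h,1-θ}`;
applied to `z_h` and `p = Π_{1-θ} ζ_z` with `D_{h,1-θ} p = z_h` it yields the identity.
-/

/-- The `L²` inner product of two piecewise polynomials (given cellwise) on the
periodic mesh `x_0 < x_1 < ⋯ < x_{N+1}`, with cell `j = [x_j, x_{j+1}]`. -/
noncomputable def ip (N : ℕ) (xs : ℕ → ℝ) (w v : Fin (N+1) → Polynomial ℝ) : ℝ :=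
  ∑ j : Fin (N+1), ∫ x in (xs j.val)..(xs (j.val + 1)), (w j).eval x * (v j).eval x

/-- Membership in the DG space `V_h` of piecewise polynomials of degree `≤ k`. -/
def memVh (k N : ℕ) (v : Fin (N+1) → Polynomial ℝ) : Prop :=
  ∀ j, (v j).natDegree ≤ k

/-- Left trace `v⁻` at the node `x_{j+1}` (right endpoint of cell `j`). -/
noncomputable def leftT (N : ℕ) (xs : ℕ → ℝ) (v : Fin (N+1) → Polynomial ℝ)
    (j : Fin (N+1)) : ℝ :=
  (v j).eval (xs (j.val + 1))

/-- Right trace `v⁺` at the node `x_{j+1}` (left endpoint of the next cell,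
with periodic wrap-around identifying `x_{N+1}` with `x_0`). -/
noncomputable def rightT (N : ℕ) (xs : ℕ → ℝ) (v : Fin (N+1) → Polynomial ℝ)
    (j : Fin (N+1)) : ℝ :=
  (v (j + 1)).eval (xs ((j + 1 : Fin (N+1)).val))

/-- Jump `[v] = v⁺ - v⁻` at the node following cell `j`. -/
noncomputable def jump (N : ℕ) (xs : ℕ → ℝ) (v : Fin (N+1) → Polynomial ℝ)
    (j : Fin (N+1)) : ℝ :=
  rightT N xs v j - leftT N xs v j

/-- The `θ`-weighted numerical flux `ŵ = θ w⁻ + (1-θ) w⁺`. -/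
noncomputable def flux (N : ℕ) (xs : ℕ → ℝ) (θ : ℝ) (w : Fin (N+1) → Polynomial ℝ)
    (j : Fin (N+1)) : ℝ :=
  θ * leftT N xs w j + (1 - θ) * rightT N xs w j

/-- `DGform k N xs θ w Dw` states that `Dw = D_{h,θ} w`, i.e. `Dw` satisfies the
variational form `⟨D_{h,θ} w, v⟩ = -⟨w, ∂ₓ v⟩ - ∑_j ŵ_{j+1/2} [v]_{j+1/2}` for all
test functions `v` in the DG space. -/
def DGform (k N : ℕ) (xs : ℕ → ℝ) (θ : ℝ) (w Dw : Fin (N+1) → Polynomial ℝ) : Prop :=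
  ∀ v, memVh k N v →
    ip N xs Dw v =
      -(∑ j : Fin (N+1), ∫ x in (xs j.val)..(xs (j.val + 1)),
          (w j).eval x * ((v j).derivative.eval x))
      - ∑ j : Fin (N+1), flux N xs θ w j * jump N xs v j

theorem Polynomial.integral_eval_mul_derivative_add (p q : ℝ[X]) (a b : ℝ) :
    (∫ x in a..b, p.eval x * q.derivative.eval x)
      + (∫ x in a..b, q.eval x * p.derivative.eval x)
      = (p * q).eval b - (p * q).eval a := by
  have integrable (r s : ℝ[X]) :
      IntervalIntegrable (fun x => r.eval x * s.eval x) MeasureTheory.volume a b :=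
    (r.continuous.mul s.continuous).intervalIntegrable a b
  rw [← intervalIntegral.integral_add (integrable p q.derivative) (integrable q p.derivative),
    eval_mul, eval_mul, ← intervalIntegral.integral_deriv_mul_eq_sub (fun x _ => p.hasDerivAt x)
      (fun x _ => q.hasDerivAt x) (p.derivative.continuous.intervalIntegrable a b)
      (q.derivative.continuous.intervalIntegrable a b)]
  congr 1 with x
  ring

section PeriodicMesh

variable {N : ℕ} (xs : ℕ → ℝ)

theorem flux_mul_jump_add_flux_mul_jump (θ : ℝ) (w v : Fin (N+1) → ℝ[X]) (j : Fin (N+1)) :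
    flux N xs θ w j * jump N xs v j + flux N xs (1 - θ) v j * jump N xs w j
      = jump N xs (w * v) j := by
  simp only [flux, jump, leftT, rightT, Pi.mul_apply, eval_mul]
  ring

theorem sum_jump_add_sum_cell_increment (u : Fin (N+1) → ℝ[X]) :
    ∑ j, jump N xs u j + ∑ j : Fin (N+1), ((u j).eval (xs (j.val + 1)) - (u j).eval (xs j.val))
      = 0 := by
  have shift : ∑ j, rightT N xs u j = ∑ j : Fin (N+1), (u j).eval (xs j.val) :=
    Fintype.sum_equiv (Equiv.addRight 1) _ _ fun _ => rfl
  simp only [jump, Finset.sum_sub_distrib, shift, leftT]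
  ring

theorem ip_DGform_eq_neg_ip_DGform {k : ℕ} {θ : ℝ} {w Dw v Dv : Fin (N+1) → ℝ[X]}
    (hw : memVh k N w) (hv : memVh k N v)
    (hDw : DGform k N xs θ w Dw) (hDv : DGform k N xs (1 - θ) v Dv) :
    ip N xs Dw v = -ip N xs Dv w := by
  have cells : ∀ j : Fin (N+1),
      (∫ x in (xs j.val)..(xs (j.val + 1)), (w j).eval x * (v j).derivative.eval x)
        + (∫ x in (xs j.val)..(xs (j.val + 1)), (v j).eval x * (w j).derivative.eval x)
        = ((w * v) j).eval (xs (j.val + 1)) - ((w * v) j).eval (xs j.val) :=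
    fun j => integral_eval_mul_derivative_add _ _ _ _
  have nodes := sum_jump_add_sum_cell_increment xs (w * v)
  rw [hDw v hv, hDv w hw]
  simp only [← Finset.sum_congr rfl (fun j _ => cells j),
    ← Finset.sum_congr rfl (fun j _ => flux_mul_jump_add_flux_mul_jump xs θ w v j),
    Finset.sum_add_distrib] at nodes
  linarith

end PeriodicMesh

/-- `p` stands for `Π_{1-θ} ζ_z`: its defining property
`D_{h,1-θ} Π_{1-θ} ζ_z = Π₀ ∂ₓ ζ_z = Π₀ z_h = z_h` reads `DGform k N xs (1-θ) p z`. -/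
theorem dg_inverse_identity_general (k N : ℕ) (xs : ℕ → ℝ)
    (θ : ℝ)
    (z Dz p : Fin (N+1) → Polynomial ℝ)
    (hz : memVh k N z) (hp : memVh k N p)
    (hDzdef : DGform k N xs θ z Dz)
    (hpdef : DGform k N xs (1 - θ) p z) :
    ip N xs z z = - ip N xs Dz p := by
  rw [ip_DGform_eq_neg_ip_DGform xs hz hp hDzdef hpdef, neg_neg]

/-- Key identity for the invertibility of `D_{h,θ}` on the mean-zero subspace:
for `z_h ∈ Z_h` and `θ ≠ 1/2`, `‖z_h‖² = -⟨D_{h,θ} z_h, Π_{1-θ} ζ_z⟩`.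
Here `p` plays the role of `Π_{1-θ} ζ_z` where `ζ_z(x) = ∫_{x_{1/2}}^x z_h`, so that
the defining property `D_{h,1-θ} Π_{1-θ} ζ_z = Π₀ ∂ₓ ζ_z = Π₀ z_h = z_h` of the
Gauss–Radau-type projection reads `DGform k N xs (1-θ) p z`. -/
theorem dg_inverse_identity (k N : ℕ) (xs : ℕ → ℝ) (hxs : StrictMono xs)
    (θ : ℝ) (hθ : θ ≠ 1/2)
    (z Dz p : Fin (N+1) → Polynomial ℝ)
    (hz : memVh k N z) (hDz : memVh k N Dz) (hp : memVh k N p)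
    (hmean : ip N xs z (fun _ => 1) = 0)
    (hDzdef : DGform k N xs θ z Dz)
    (hpdef : DGform k N xs (1 - θ) p z) :
    ip N xs z z = - ip N xs Dz p :=
  dg_inverse_identity_general k N xs θ z Dz p hz hp hDzdef hpdef
end

section
/- For $\theta \ne \tfrac12$, the DG derivative operator $D_{h,\theta}$ maps the mean-zero subspace $Z_h$ into itself and is a bijection on $Z_h$; moreover there is a constant $C$ (independent of $z_h$) such that $\|D_{h,\theta}^{-1} z_h\| \le C \|z_h\|$ for all $z_h \in Z_h$. -/
/-!
For `θ ≠ 1/2` the scheme satisfies the energy identity `⟨D w, w⟩ = (θ - 1/2) ∑ [w]²`, so `D w = 0`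
forces every jump of `w` to vanish. The numerical flux is then single valued, integration by parts
shows that the broken derivative of `w` is orthogonal to `V_h`, hence zero, and `w` is a global
constant, which is zero when `w` has mean zero. Since the variational problem defining `D` has
unique solutions, `D` is linear on `V_h`; being injective on the finite-dimensional space `Z_h`, it
is bijective there, and its inverse is bounded for the norm of `⟨·, ·⟩`.
-/

open Polynomial

/-- The mean-zero subspace `Z_h = {v_h ∈ V_h : ⟨v_h, 1⟩ = 0}`. -/
def Zh (k N : ℕ) (xs : ℕ → ℝ) : Set (Fin (N+1) → Polynomial ℝ) :=
  {v | memVh k N v ∧ ip N xs v (fun _ => 1) = 0}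

open MeasureTheory

namespace Polynomial

theorem intervalIntegrable_eval (p : ℝ[X]) (a b : ℝ) :
    IntervalIntegrable (fun x => p.eval x) volume a b :=
  p.continuous.intervalIntegrable a b

theorem integral_eval_mul_derivative (p q : ℝ[X]) (a b : ℝ) :
    ∫ x in a..b, p.eval x * q.derivative.eval x =
      p.eval b * q.eval b - p.eval a * q.eval a - ∫ x in a..b, p.derivative.eval x * q.eval x :=
  intervalIntegral.integral_mul_deriv_eq_deriv_mul (fun x _ => p.hasDerivAt x)
    (fun x _ => q.hasDerivAt x) (p.derivative.intervalIntegrable_eval a b)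
    (q.derivative.intervalIntegrable_eval a b)

theorem eq_zero_of_integral_eval_mul_self_eq_zero {p : ℝ[X]} {a b : ℝ} (hab : a < b)
    (h : ∫ x in a..b, p.eval x * p.eval x = 0) : p = 0 := by
  by_contra hp
  obtain ⟨c, hc, hroot⟩ := (Set.Icc_infinite hab).exists_notMem_finset p.roots.toFinset
  have hpos : 0 < p.eval c * p.eval c :=
    mul_self_pos.2 fun h0 => hroot (by simp [hp, h0])
  exact (intervalIntegral.integral_pos hab (p.continuous.mul p.continuous).continuousOn
    (fun x _ => mul_self_nonneg _) ⟨c, hc, hpos⟩).ne' h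

end Polynomial

theorem Fin.apply_eq_apply_zero_of_apply_add_one_eq {α : Type*} {N : ℕ} {f : Fin (N+1) → α}
    (hf : ∀ j, f (j + 1) = f j) (j : Fin (N+1)) : f j = f 0 := by
  induction j using Fin.induction with
  | zero => rfl
  | succ i ih => rw [← Fin.coeSucc_eq_succ, hf, ih]

theorem LinearMap.BilinForm.exists_sqrt_le_of_injective {E : Type*} [AddCommGroup E]
    [Module ℝ E] [FiniteDimensional ℝ E] (B : LinearMap.BilinForm ℝ E) (hB : B.IsSymm)
    (hpos : ∀ x, 0 ≤ B x x) (hdef : ∀ x, B x x = 0 → x = 0) {g : E →ₗ[ℝ] E}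
    (hg : Function.Injective g) : ∃ C, ∀ x, √(B x x) ≤ C * √(B (g x) (g x)) := by
  let core : InnerProductSpace.Core ℝ E :=
    { inner := fun x y => B x y
      conj_inner_symm := fun x y => hB.eq y x
      re_inner_nonneg := hpos
      add_left := fun x y z => by simp
      smul_left := fun x y r => by simp
      definite := hdef }
  let _ : NormedAddCommGroup E := core.toNormedAddCommGroup
  let _ : InnerProductSpace ℝ E := InnerProductSpace.ofCore core.toCore
  have hnorm : ∀ x : E, ‖x‖ = √(B x x) := fun x => norm_eq_sqrt_real_inner x
  let e := LinearEquiv.ofInjectiveEndo g hg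
  refine ⟨‖LinearMap.toContinuousLinearMap (e.symm : E →ₗ[ℝ] E)‖, fun x => ?_⟩
  have hx : e.symm (g x) = x := e.symm_apply_apply x
  simpa only [hnorm, LinearMap.coe_toContinuousLinearMap', LinearEquiv.coe_coe, hx] using
    (LinearMap.toContinuousLinearMap (e.symm : E →ₗ[ℝ] E)).le_opNorm (g x)

namespace DG

section Mesh

variable {N : ℕ} (xs : ℕ → ℝ)

noncomputable def cellIntegral : (Fin (N+1) → ℝ[X]) →ₗ[ℝ] ℝ where
  toFun f := ∑ j : Fin (N+1), ∫ x in (xs j.val)..(xs (j.val + 1)), (f j).eval x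
  map_add' f g := by
    simp only [Pi.add_apply, eval_add, ← Finset.sum_add_distrib]
    exact Finset.sum_congr rfl fun j _ =>
      intervalIntegral.integral_add (intervalIntegrable_eval _ _ _) (intervalIntegrable_eval _ _ _)
  map_smul' c f := by
    simp [Finset.mul_sum, intervalIntegral.integral_const_mul]

theorem ip_eq_cellIntegral (w v : Fin (N+1) → ℝ[X]) : ip N xs w v = cellIntegral xs (w * v) := by
  simp [ip, cellIntegral]

theorem ip_one_right (v : Fin (N+1) → ℝ[X]) : ip N xs v (fun _ => 1) = cellIntegral xs v := by
  simp [ip, cellIntegral]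

noncomputable def ipForm : LinearMap.BilinForm ℝ (Fin (N+1) → ℝ[X]) :=
  (LinearMap.mul ℝ _).compr₂ (cellIntegral xs)

@[simp]
theorem ipForm_apply (w v : Fin (N+1) → ℝ[X]) : ipForm xs w v = ip N xs w v :=
  (ip_eq_cellIntegral xs w v).symm

theorem ip_comm (w v : Fin (N+1) → ℝ[X]) : ip N xs w v = ip N xs v w := by
  rw [ip_eq_cellIntegral, ip_eq_cellIntegral, mul_comm]

theorem sum_cell_lengths : ∑ j : Fin (N+1), (xs (j.val + 1) - xs j.val) = xs (N+1) - xs 0 := by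
  rw [Fin.sum_univ_eq_sum_range (fun i => xs (i + 1) - xs i), Finset.sum_range_sub]

noncomputable def brokenDeriv (v : Fin (N+1) → ℝ[X]) : Fin (N+1) → ℝ[X] :=
  fun j => (v j).derivative

/-- Cellwise integration by parts: the left-endpoint values on cell `j + 1` are the right traces
at the node after cell `j`, periodically. -/
theorem cellIntegral_mul_brokenDeriv (w v : Fin (N+1) → ℝ[X]) :
    cellIntegral xs (w * brokenDeriv v) =
      ∑ j, (leftT N xs w j * leftT N xs v j - rightT N xs w j * rightT N xs v j)
        - cellIntegral xs (brokenDeriv w * v) := by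
  have hwrap : ∑ j : Fin (N+1), (w j).eval (xs j.val) * (v j).eval (xs j.val) =
      ∑ j, rightT N xs w j * rightT N xs v j :=
    (Equiv.sum_comp (Equiv.addRight 1) fun j => (w j).eval (xs j.val) * (v j).eval (xs j.val)).symm
  simp only [cellIntegral, LinearMap.coe_mk, AddHom.coe_mk, Pi.mul_apply, eval_mul, brokenDeriv,
    integral_eval_mul_derivative, Finset.sum_sub_distrib, leftT, hwrap]

variable {xs}

theorem ip_self_nonneg (hxs : StrictMono xs) (v : Fin (N+1) → ℝ[X]) : 0 ≤ ip N xs v v :=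
  Finset.sum_nonneg fun j _ => intervalIntegral.integral_nonneg (hxs j.val.lt_succ_self).le
    fun _ _ => mul_self_nonneg _

theorem eq_zero_of_ip_self_eq_zero (hxs : StrictMono xs) {v : Fin (N+1) → ℝ[X]}
    (h : ip N xs v v = 0) : v = 0 := by
  have hcell := (Finset.sum_eq_zero_iff_of_nonneg fun j _ =>
    intervalIntegral.integral_nonneg (hxs j.val.lt_succ_self).le
      fun _ _ => mul_self_nonneg _).mp h
  exact funext fun j => eq_zero_of_integral_eval_mul_self_eq_zero (hxs j.val.lt_succ_self)
    (hcell j (Finset.mem_univ j))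

theorem eq_zero_of_brokenDeriv_eq_zero (hxs : StrictMono xs) {w : Fin (N+1) → ℝ[X]}
    (hd : brokenDeriv w = 0) (hjump : ∀ j, jump N xs w j = 0) (hmean : cellIntegral xs w = 0) :
    w = 0 := by
  have hconst : ∀ j, w j = C ((w j).coeff 0) := fun j =>
    eq_C_of_natDegree_eq_zero (derivative_eq_zero.mp (congrFun hd j))
  have hstep : ∀ j, (w (j + 1)).coeff 0 = (w j).coeff 0 := fun j => by
    have := hjump j
    rw [jump, rightT, leftT, hconst (j + 1), hconst j, eval_C, eval_C, sub_eq_zero] at this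
    exact this
  set c := (w 0).coeff 0
  have hw : w = fun _ => C c := funext fun j => (hconst j).trans <| congrArg C
    (Fin.apply_eq_apply_zero_of_apply_add_one_eq (f := fun j => (w j).coeff 0) hstep j)
  have hc : (xs (N+1) - xs 0) * c = 0 := by
    rw [← sum_cell_lengths, Finset.sum_mul]
    simpa [hw, cellIntegral] using hmean
  have hc0 : c = 0 := (mul_eq_zero.mp hc).resolve_left (sub_ne_zero.mpr (hxs N.succ_pos).ne')
  rw [hw, hc0, C_0]
  rfl

end Mesh

section Spaces

variable (k N : ℕ) (xs : ℕ → ℝ)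

noncomputable def vh : Submodule ℝ (Fin (N+1) → ℝ[X]) :=
  Submodule.pi Set.univ fun _ => degreeLE ℝ k

variable {k N} in
theorem mem_vh {v : Fin (N+1) → ℝ[X]} : v ∈ vh k N ↔ memVh k N v := by
  simp [vh, memVh, mem_degreeLE, natDegree_le_iff_degree_le]

instance : FiniteDimensional ℝ (vh k N) :=
  Module.Finite.iff_fg.mpr <| Submodule.fg_pi fun _ => by
    rw [← degreeLT_succ_eq_degreeLE]
    exact Module.Finite.iff_fg.mp (Module.Finite.equiv (degreeLTEquiv ℝ (k+1)).symm)

noncomputable def zh : Submodule ℝ (Fin (N+1) → ℝ[X]) :=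
  vh k N ⊓ LinearMap.ker (cellIntegral xs)

instance : FiniteDimensional ℝ (zh k N xs) :=
  Submodule.finiteDimensional_inf_left _ _

variable {k N xs}

theorem mem_zh {v : Fin (N+1) → ℝ[X]} : v ∈ zh k N xs ↔ v ∈ Zh k N xs := by
  rw [zh, Submodule.mem_inf, mem_vh, LinearMap.mem_ker, ← ip_one_right]
  rfl

theorem coe_zh : (zh k N xs : Set (Fin (N+1) → ℝ[X])) = Zh k N xs :=
  Set.ext fun _ => mem_zh

theorem _root_.memVh.add {v w : Fin (N+1) → ℝ[X]} (hv : memVh k N v) (hw : memVh k N w) :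
    memVh k N (v + w) :=
  mem_vh.mp (add_mem (mem_vh.mpr hv) (mem_vh.mpr hw))

theorem _root_.memVh.sub {v w : Fin (N+1) → ℝ[X]} (hv : memVh k N v) (hw : memVh k N w) :
    memVh k N (v - w) :=
  mem_vh.mp (sub_mem (mem_vh.mpr hv) (mem_vh.mpr hw))

theorem _root_.memVh.smul (c : ℝ) {v : Fin (N+1) → ℝ[X]} (hv : memVh k N v) : memVh k N (c • v) :=
  mem_vh.mp (Submodule.smul_mem _ c (mem_vh.mpr hv))

theorem _root_.memVh.brokenDeriv {v : Fin (N+1) → ℝ[X]} (hv : memVh k N v) :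
    memVh k N (DG.brokenDeriv v) :=
  fun j => (natDegree_derivative_le _).trans ((Nat.sub_le _ _).trans (hv j))

variable (k N) in
theorem memVh_one : memVh k N fun _ => 1 := fun j => by simp

end Spaces

section Form

variable {k N : ℕ} {xs : ℕ → ℝ} {θ : ℝ}

theorem flux_add (w w' : Fin (N+1) → ℝ[X]) (j : Fin (N+1)) :
    flux N xs θ (w + w') j = flux N xs θ w j + flux N xs θ w' j := by
  simp only [flux, leftT, rightT, Pi.add_apply, eval_add]
  ring

theorem flux_smul (c : ℝ) (w : Fin (N+1) → ℝ[X]) (j : Fin (N+1)) :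
    flux N xs θ (c • w) j = c * flux N xs θ w j := by
  simp only [flux, leftT, rightT, Pi.smul_apply, eval_smul, smul_eq_mul]
  ring

variable (xs θ) in
noncomputable def dgFunctional (v : Fin (N+1) → ℝ[X]) : (Fin (N+1) → ℝ[X]) →ₗ[ℝ] ℝ where
  toFun w := -cellIntegral xs (w * brokenDeriv v) - ∑ j, flux N xs θ w j * jump N xs v j
  map_add' w w' := by
    simp only [add_mul, map_add, flux_add, Finset.sum_add_distrib]
    ring
  map_smul' c w := by
    simp only [smul_mul_assoc, map_smul, flux_smul, mul_assoc, ← Finset.mul_sum, smul_eq_mul,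
      RingHom.id_apply]
    ring

theorem dgform_iff {w u : Fin (N+1) → ℝ[X]} :
    DGform k N xs θ w u ↔ ∀ v, memVh k N v → ip N xs u v = dgFunctional xs θ v w := by
  simp [DGform, dgFunctional, cellIntegral, brokenDeriv]

end Form

end DG

namespace DGform

open DG

variable {k N : ℕ} {xs : ℕ → ℝ} {θ : ℝ} {w w' u u' : Fin (N+1) → ℝ[X]}

theorem add (h : DGform k N xs θ w u) (h' : DGform k N xs θ w' u') :
    DGform k N xs θ (w + w') (u + u') := by
  rw [dgform_iff] at *
  intro v hv
  rw [← ipForm_apply, LinearMap.map_add₂, ipForm_apply, ipForm_apply, h v hv, h' v hv, map_add]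

theorem smul (c : ℝ) (h : DGform k N xs θ w u) : DGform k N xs θ (c • w) (c • u) := by
  rw [dgform_iff] at *
  intro v hv
  rw [← ipForm_apply, LinearMap.map_smul₂, ipForm_apply, h v hv, map_smul]

theorem unique (hxs : StrictMono xs) (hu : memVh k N u) (hu' : memVh k N u')
    (h : DGform k N xs θ w u) (h' : DGform k N xs θ w u') : u = u' := by
  have hzero : ip N xs (u - u') (u - u') = 0 := by
    rw [← ipForm_apply, LinearMap.map_sub₂, ipForm_apply, ipForm_apply, h _ (hu.sub hu'),
      h' _ (hu.sub hu'), sub_self]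
  exact sub_eq_zero.mp (eq_zero_of_ip_self_eq_zero hxs hzero)

theorem ip_one_eq_zero (h : DGform k N xs θ w u) : ip N xs u (fun _ => 1) = 0 := by
  simpa [brokenDeriv, jump, rightT, leftT] using h _ (memVh_one k N)

theorem ip_self_eq (hw : memVh k N w) (h : DGform k N xs θ w u) :
    ip N xs u w = (θ - 1/2) * ∑ j, jump N xs w j ^ 2 := by
  have hIBP := cellIntegral_mul_brokenDeriv xs w w
  rw [mul_comm (brokenDeriv w) w] at hIBP
  have hhalf : cellIntegral xs (w * brokenDeriv w) =
      ∑ j, (leftT N xs w j * leftT N xs w j - rightT N xs w j * rightT N xs w j) / 2 := by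
    rw [← Finset.sum_div]
    linarith
  rw [dgform_iff.mp h w hw, dgFunctional, LinearMap.coe_mk, AddHom.coe_mk, hhalf, Finset.mul_sum,
    ← Finset.sum_neg_distrib, ← Finset.sum_sub_distrib]
  refine Finset.sum_congr rfl fun j _ => ?_
  rw [flux, jump]
  ring

theorem jump_eq_zero (hθ : θ ≠ 1/2) (hw : memVh k N w) (h : DGform k N xs θ w 0) (j : Fin (N+1)) :
    jump N xs w j = 0 := by
  have henergy := h.ip_self_eq hw
  rw [← ipForm_apply, LinearMap.map_zero₂] at henergy
  have hsum : ∑ j, jump N xs w j ^ 2 = 0 :=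
    (mul_eq_zero.mp henergy.symm).resolve_left (sub_ne_zero.mpr hθ)
  exact pow_eq_zero_iff two_ne_zero |>.mp
    ((Finset.sum_eq_zero_iff_of_nonneg fun j _ => sq_nonneg _).mp hsum j (Finset.mem_univ j))

theorem ip_brokenDeriv_eq_zero (h : DGform k N xs θ w 0) (hjump : ∀ j, jump N xs w j = 0)
    {v : Fin (N+1) → ℝ[X]} (hv : memVh k N v) : ip N xs (brokenDeriv w) v = 0 := by
  have hform := dgform_iff.mp h v hv
  have hflux : ∑ j, flux N xs θ w j * jump N xs v j =
      -∑ j, (leftT N xs w j * leftT N xs v j - rightT N xs w j * rightT N xs v j) := by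
    rw [← Finset.sum_neg_distrib]
    refine Finset.sum_congr rfl fun j _ => ?_
    rw [flux, jump, sub_eq_zero.mp (hjump j)]
    ring
  rw [← ipForm_apply, LinearMap.map_zero₂, dgFunctional, LinearMap.coe_mk, AddHom.coe_mk,
    cellIntegral_mul_brokenDeriv, hflux] at hform
  rw [ip_eq_cellIntegral]
  linarith

theorem eq_zero (hxs : StrictMono xs) (hθ : θ ≠ 1/2) (hw : w ∈ Zh k N xs)
    (h : DGform k N xs θ w 0) : w = 0 := by
  have hjump := h.jump_eq_zero hθ hw.1
  have hd : brokenDeriv w = 0 :=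
    eq_zero_of_ip_self_eq_zero hxs (h.ip_brokenDeriv_eq_zero hjump hw.1.brokenDeriv)
  exact eq_zero_of_brokenDeriv_eq_zero hxs hd hjump (by rw [← ip_one_right]; exact hw.2)

end DGform

namespace DG

variable {k N : ℕ} {xs : ℕ → ℝ} {θ : ℝ}

def IsDGDerivative (k N : ℕ) (xs : ℕ → ℝ) (θ : ℝ)
    (D : (Fin (N+1) → ℝ[X]) → (Fin (N+1) → ℝ[X])) : Prop :=
  ∀ w, memVh k N w → memVh k N (D w) ∧ DGform k N xs θ w (D w)

namespace IsDGDerivative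

variable {D : (Fin (N+1) → ℝ[X]) → (Fin (N+1) → ℝ[X])}

theorem map_add (hxs : StrictMono xs) (hD : IsDGDerivative k N xs θ D)
    {w w' : Fin (N+1) → ℝ[X]} (hw : memVh k N w) (hw' : memVh k N w') :
    D (w + w') = D w + D w' :=
  (hD _ (hw.add hw')).2.unique hxs (hD _ (hw.add hw')).1 ((hD w hw).1.add (hD w' hw').1)
    ((hD w hw).2.add (hD w' hw').2)

theorem map_smul (hxs : StrictMono xs) (hD : IsDGDerivative k N xs θ D) (c : ℝ)
    {w : Fin (N+1) → ℝ[X]} (hw : memVh k N w) : D (c • w) = c • D w :=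
  (hD _ (hw.smul c)).2.unique hxs (hD _ (hw.smul c)).1 ((hD w hw).1.smul c) ((hD w hw).2.smul c)

theorem mapsTo_zh (hD : IsDGDerivative k N xs θ D) :
    Set.MapsTo D (zh k N xs) (zh k N xs) := fun z hz =>
  mem_zh.mpr ⟨(hD z (mem_zh.mp hz).1).1, (hD z (mem_zh.mp hz).1).2.ip_one_eq_zero⟩

noncomputable def restrictZh (hxs : StrictMono xs) (hD : IsDGDerivative k N xs θ D) :
    zh k N xs →ₗ[ℝ] zh k N xs where
  toFun := hD.mapsTo_zh.restrict D _ _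
  map_add' z z' := Subtype.ext (hD.map_add hxs (mem_zh.mp z.2).1 (mem_zh.mp z'.2).1)
  map_smul' c z := Subtype.ext (hD.map_smul hxs c (mem_zh.mp z.2).1)

theorem restrictZh_bijective (hxs : StrictMono xs) (hθ : θ ≠ 1/2)
    (hD : IsDGDerivative k N xs θ D) : Function.Bijective (hD.restrictZh hxs) := by
  have hinj : Function.Injective (hD.restrictZh hxs) := by
    refine (injective_iff_map_eq_zero _).mpr fun z hz => Subtype.ext ?_
    have hform := (hD z (mem_zh.mp z.2).1).2
    rw [show D z = 0 from congrArg Subtype.val hz] at hform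
    exact hform.eq_zero hxs hθ (mem_zh.mp z.2)
  exact ⟨hinj, LinearMap.injective_iff_surjective.mp hinj⟩

end IsDGDerivative

theorem exists_sqrt_ip_le_of_injective (hxs : StrictMono xs) {T : zh k N xs →ₗ[ℝ] zh k N xs}
    (hT : Function.Injective T) :
    ∃ C, ∀ z : zh k N xs, √(ip N xs z z) ≤ C * √(ip N xs (T z) (T z)) := by
  simpa using ((ipForm xs).restrict (zh k N xs)).exists_sqrt_le_of_injective
    ⟨fun y z => by simpa using ip_comm xs y.1 z.1⟩ (fun z => by simpa using ip_self_nonneg hxs z.1)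
    (fun z hz => Subtype.ext (eq_zero_of_ip_self_eq_zero hxs (by simpa using hz))) hT

end DG

open DG in
/-- For `θ ≠ 1/2` the DG derivative operator `D_{h,θ}` maps the mean-zero subspace
`Z_h` into itself, is a bijection on `Z_h`, and its inverse is bounded:
`‖D_{h,θ}⁻¹ z_h‖ ≤ C ‖z_h‖` for all `z_h ∈ Z_h`, with `C` independent of `z_h`. -/
theorem dg_inverse_bounded (k N : ℕ) (xs : ℕ → ℝ) (hxs : StrictMono xs)
    (θ : ℝ) (hθ : θ ≠ 1/2)
    (D : (Fin (N+1) → Polynomial ℝ) → (Fin (N+1) → Polynomial ℝ))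
    (hD : ∀ w, memVh k N w → memVh k N (D w) ∧ DGform k N xs θ w (D w)) :
    (∀ z ∈ Zh k N xs, D z ∈ Zh k N xs) ∧
    Set.BijOn D (Zh k N xs) (Zh k N xs) ∧
    ∃ C : ℝ, ∀ z ∈ Zh k N xs, ∀ y ∈ Zh k N xs, D y = z →
      Real.sqrt (ip N xs y y) ≤ C * Real.sqrt (ip N xs z z) := by
  replace hD : IsDGDerivative k N xs θ D := hD
  have hT := hD.restrictZh_bijective hxs hθ
  have hmaps := hD.mapsTo_zh
  rw [← coe_zh]
  refine ⟨hmaps, ⟨hmaps, hmaps.restrict_inj.mp hT.1, hmaps.restrict_surjective_iff.mp hT.2⟩, ?_⟩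
  obtain ⟨C, hC⟩ := exists_sqrt_ip_le_of_injective hxs hT.1
  exact ⟨C, fun z _ y hy hDy => hDy ▸ hC ⟨y, hy⟩⟩
end

section
/- Let $w$ be a periodic smooth function with $\langle w, 1 \rangle = 0$, and let $\Pi_\theta$ denote the projection satisfying $\Pi_\theta w \in Z_h + \text{constants}$ with $D_{h,\theta}(\Pi_\theta w - \overline{\Pi_\theta w}) = \Pi_0 \partial_x w$, where $\overline{v} = \langle v,1\rangle/\langle 1,1\rangle$. Then $D_{h,\theta}^{-1} \Pi_0 \partial_x w = \Pi_\theta w - \overline{\Pi_\theta w}$, and $\|w - D_{h,\theta}^{-1} \Pi_0 \partial_x w\| \le 2\, \|w - \Pi_\theta w\|$. -/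
open Polynomial

/-- The `L²` pairing of a function with a piecewise polynomial. -/
noncomputable def ipf (N : ℕ) (xs : ℕ → ℝ) (f : ℝ → ℝ)
    (v : Fin (N+1) → Polynomial ℝ) : ℝ :=
  ∑ j : Fin (N+1), ∫ x in (xs j.val)..(xs (j.val + 1)), f x * (v j).eval x

/-- The `L²` norm of the difference between a function and a piecewise polynomial. -/
noncomputable def errNorm (N : ℕ) (xs : ℕ → ℝ) (f : ℝ → ℝ)
    (v : Fin (N+1) → Polynomial ℝ) : ℝ :=
  Real.sqrt (∑ j : Fin (N+1),
    ∫ x in (xs j.val)..(xs (j.val + 1)), (f x - (v j).eval x) ^ 2)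

/-- The cell average `v̄ = ⟨v, 1⟩ / ⟨1, 1⟩`. -/
noncomputable def meanOf (N : ℕ) (xs : ℕ → ℝ) (v : Fin (N+1) → Polynomial ℝ) : ℝ :=
  ip N xs v (fun _ => 1) / ip N xs (fun _ => 1) (fun _ => 1)


open Polynomial intervalIntegral MeasureTheory Finset

lemma polyII (p q : Polynomial ℝ) (a b : ℝ) :
    IntervalIntegrable (fun x => p.eval x * q.eval x) volume a b :=
  (p.continuous.mul q.continuous).intervalIntegrable a b

lemma poly_ibp (a b : ℝ) (p q : Polynomial ℝ) :
    (∫ x in a..b, p.eval x * q.derivative.eval x)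
      = p.eval b * q.eval b - p.eval a * q.eval a
        - ∫ x in a..b, p.derivative.eval x * q.eval x := by
  have h : ∀ x ∈ Set.uIcc a b, HasDerivAt (fun y => p.eval y * q.eval y)
      (p.derivative.eval x * q.eval x + p.eval x * q.derivative.eval x) x := by
    intro x _
    simpa [mul_comm] using (p.hasDerivAt x).fun_mul (q.hasDerivAt x)
  have hi : IntervalIntegrable
      (fun x => p.derivative.eval x * q.eval x + p.eval x * q.derivative.eval x)
      volume a b := (polyII _ _ _ _).add (polyII _ _ _ _)
  have h2 := intervalIntegral.integral_eq_sub_of_hasDerivAt h hi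
  rw [intervalIntegral.integral_add (polyII _ _ _ _) (polyII _ _ _ _)] at h2
  linarith

lemma poly_self_ibp (a b : ℝ) (p : Polynomial ℝ) :
    (∫ x in a..b, p.eval x * p.derivative.eval x)
      = (p.eval b ^ 2 - p.eval a ^ 2) / 2 := by
  have h := poly_ibp a b p p
  have h2 : (∫ x in a..b, p.derivative.eval x * p.eval x)
      = ∫ x in a..b, p.eval x * p.derivative.eval x := by
    apply intervalIntegral.integral_congr; intro x _; ring
  rw [h2] at h
  nlinarith [h]

lemma poly_eq_zero_of_integral_sq (a b : ℝ) (hab : a < b) (p : Polynomial ℝ)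
    (h : (∫ x in a..b, p.eval x * p.eval x) = 0) : p = 0 := by
  by_contra hp
  have hcont : Continuous fun x => p.eval x * p.eval x := p.continuous.mul p.continuous
  have hint : MeasureTheory.IntegrableOn (fun x => p.eval x * p.eval x) (Set.Ioc a b) :=
    hcont.integrableOn_Ioc
  have h0 : (∫ x in Set.Ioc a b, p.eval x * p.eval x) = 0 := by
    rwa [intervalIntegral.integral_of_le hab.le] at h
  have hae := (MeasureTheory.integral_eq_zero_iff_of_nonneg
      (fun x => mul_self_nonneg _) hint).mp h0
  have hroot : ∀ᵐ x ∂(volume.restrict (Set.Ioc a b)), p.eval x = 0 := by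
    filter_upwards [hae] with x hx
    have : p.eval x * p.eval x = 0 := hx
    exact mul_self_eq_zero.mp this
  rw [MeasureTheory.ae_restrict_iff' measurableSet_Ioc] at hroot
  rw [MeasureTheory.ae_iff] at hroot
  have hfin := Polynomial.finite_setOf_isRoot hp
  have hsub : Set.Ioc a b ⊆ {x | Polynomial.IsRoot p x}
      ∪ {x | ¬(x ∈ Set.Ioc a b → p.eval x = 0)} := by
    intro x hx
    by_cases hr : p.eval x = 0
    · exact Or.inl hr
    · exact Or.inr (fun hc => hr (hc hx))
  have hle : volume (Set.Ioc a b) ≤ 0 := by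
    calc volume (Set.Ioc a b)
        ≤ volume ({x | Polynomial.IsRoot p x}
            ∪ {x | ¬(x ∈ Set.Ioc a b → p.eval x = 0)}) := measure_mono hsub
      _ ≤ volume {x | Polynomial.IsRoot p x}
            + volume {x | ¬(x ∈ Set.Ioc a b → p.eval x = 0)} := measure_union_le _ _
      _ = 0 := by rw [hfin.measure_zero, hroot]; simp
  rw [Real.volume_Ioc] at hle
  simp only [le_zero_iff, ENNReal.ofReal_eq_zero] at hle
  linarith

lemma sum_shift {M : Type*} [AddCommMonoid M] (N : ℕ) (g : Fin (N+1) → M) :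
    (∑ j : Fin (N+1), g (j + 1)) = ∑ j : Fin (N+1), g j :=
  Fintype.sum_equiv (Equiv.addRight 1) _ _ (fun _ => rfl)

lemma fin_const {N : ℕ} (c : Fin (N+1) → ℝ) (h : ∀ j, c (j+1) = c j) :
    ∀ j, c j = c 0 := by
  intro ⟨n, hn⟩
  induction n with
  | zero => rfl
  | succ m ih =>
    have hm : m < N + 1 := by omega
    have h1 : (⟨m + 1, hn⟩ : Fin (N+1)) = ⟨m, hm⟩ + 1 := by
      apply Fin.ext
      simp [Fin.add_def, Nat.mod_eq_of_lt hn, Nat.mod_eq_of_lt (show 1 < N+1 by omega)]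
    rw [h1, h ⟨m, hm⟩, ih hm]

lemma mesh_sum (N : ℕ) (xs : ℕ → ℝ) :
    (∑ j : Fin (N+1), (xs (j.val + 1) - xs j.val)) = xs (N+1) - xs 0 := by
  rw [Fin.sum_univ_eq_sum_range (fun i => xs (i+1) - xs i)]
  exact Finset.sum_range_sub xs (N+1)

open Polynomial intervalIntegral MeasureTheory Finset

lemma dg_kernel (k N : ℕ) (xs : ℕ → ℝ) (hxs : StrictMono xs)
    (θ : ℝ) (hθ : θ ≠ 1/2)
    (u : Fin (N+1) → Polynomial ℝ) (hu : memVh k N u)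
    (hmean : ip N xs u (fun _ => 1) = 0)
    (hB : ∀ v, memVh k N v →
      (∑ j : Fin (N+1), ∫ x in (xs j.val)..(xs (j.val + 1)),
          (u j).eval x * ((v j).derivative.eval x))
        + (∑ j : Fin (N+1), flux N xs θ u j * jump N xs v j) = 0) :
    ∀ j, u j = 0 := by
  set L : Fin (N+1) → ℝ := fun j => (u j).eval (xs (j.val + 1)) with hLdef
  set M : Fin (N+1) → ℝ := fun j => (u j).eval (xs j.val) with hMdef
  have hLT : ∀ j, leftT N xs u j = L j := fun j => rfl
  have hRT : ∀ j, rightT N xs u j = M (j + 1) := fun j => rfl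
  -- Step A: jumps vanish
  have hjumps : ∀ j, M (j + 1) = L j := by
    have h1 := hB u hu
    have e1 : (∑ j : Fin (N+1), ∫ x in (xs j.val)..(xs (j.val + 1)),
        (u j).eval x * ((u j).derivative.eval x))
        = ∑ j : Fin (N+1), ((L j) ^ 2 - (M j) ^ 2) / 2 :=
      Finset.sum_congr rfl (fun j _ => poly_self_ibp _ _ _)
    have e2 : (∑ j : Fin (N+1), flux N xs θ u j * jump N xs u j)
        = (1/2 - θ) * (∑ j : Fin (N+1), (M (j+1) - L j) ^ 2)
          - ∑ j : Fin (N+1), ((L j) ^ 2 - (M (j+1)) ^ 2) / 2 := by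
      rw [Finset.mul_sum, ← Finset.sum_sub_distrib]
      apply Finset.sum_congr rfl
      intro j _
      simp only [flux, jump, hLT, hRT]
      ring
    have e3 : (∑ j : Fin (N+1), ((L j) ^ 2 - (M (j+1)) ^ 2) / 2)
        = ∑ j : Fin (N+1), ((L j) ^ 2 - (M j) ^ 2) / 2 := by
      simp only [sub_div]
      rw [Finset.sum_sub_distrib, Finset.sum_sub_distrib,
        sum_shift N (fun j => (M j) ^ 2 / 2)]
    rw [e1, e2, e3] at h1
    have hT : (∑ j : Fin (N+1), (M (j+1) - L j) ^ 2) = 0 := by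
      have hne : (1/2 - θ) ≠ 0 := fun hc => hθ (by linarith [sub_eq_zero.mp hc])
      have : (1/2 - θ) * (∑ j : Fin (N+1), (M (j+1) - L j) ^ 2) = 0 := by linarith
      rcases mul_eq_zero.mp this with h | h
      · exact absurd h hne
      · exact h
    intro j
    have := (Finset.sum_eq_zero_iff_of_nonneg
      (fun j _ => sq_nonneg (M (j+1) - L j))).mp hT j (Finset.mem_univ j)
    exact sub_eq_zero.mp (sq_eq_zero_iff.mp this)
  -- Step B: the broken derivative vanishes against all test functions
  have hD : ∀ v, memVh k N v →
      (∑ j : Fin (N+1), ∫ x in (xs j.val)..(xs (j.val + 1)),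
        (u j).derivative.eval x * ((v j).eval x)) = 0 := by
    intro v hv
    have h1 := hB v hv
    have e1 : (∑ j : Fin (N+1), ∫ x in (xs j.val)..(xs (j.val + 1)),
        (u j).eval x * ((v j).derivative.eval x))
        = (∑ j : Fin (N+1), (L j * (v j).eval (xs (j.val + 1))
            - M j * (v j).eval (xs j.val)))
          - ∑ j : Fin (N+1), ∫ x in (xs j.val)..(xs (j.val + 1)),
              (u j).derivative.eval x * ((v j).eval x) := by
      rw [← Finset.sum_sub_distrib]
      apply Finset.sum_congr rfl
      intro j _
      rw [poly_ibp]
    have e2 : (∑ j : Fin (N+1), flux N xs θ u j * jump N xs v j)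
        = (∑ j : Fin (N+1), L j * (v (j+1)).eval (xs ((j+1 : Fin (N+1)).val)))
          - ∑ j : Fin (N+1), L j * (v j).eval (xs (j.val + 1)) := by
      rw [← Finset.sum_sub_distrib]
      apply Finset.sum_congr rfl
      intro j _
      have hfl : flux N xs θ u j = L j := by
        rw [flux, hLT, hRT, hjumps j]; ring
      rw [hfl, jump, rightT, leftT, mul_sub]
    have e3 : (∑ j : Fin (N+1), M j * (v j).eval (xs j.val))
        = ∑ j : Fin (N+1), L j * (v (j+1)).eval (xs ((j+1 : Fin (N+1)).val)) := by
      rw [← sum_shift N (fun j => M j * (v j).eval (xs j.val))]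
      apply Finset.sum_congr rfl
      intro j _
      rw [hjumps j]
    rw [e1, e2, Finset.sum_sub_distrib, e3] at h1
    linarith
  -- apply with v = derivative of u
  have hdz : ∀ j, (u j).derivative = 0 := by
    have hv : memVh k N (fun j => (u j).derivative) := fun j =>
      le_trans (Polynomial.natDegree_derivative_le _)
        (le_trans (Nat.sub_le _ _) (hu j))
    have h1 := hD _ hv
    intro j
    have hab : xs j.val < xs (j.val + 1) := hxs (Nat.lt_succ_self _)
    have hz : (∫ x in (xs j.val)..(xs (j.val + 1)),
        (u j).derivative.eval x * ((u j).derivative.eval x)) = 0 := by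
      refine (Finset.sum_eq_zero_iff_of_nonneg ?_).mp h1 j (Finset.mem_univ j)
      intro i _
      apply intervalIntegral.integral_nonneg (hxs (Nat.lt_succ_self _)).le
      intro x _
      exact mul_self_nonneg _
    exact poly_eq_zero_of_integral_sq _ _ hab _ hz
  have hC : ∀ j, u j = Polynomial.C ((u j).coeff 0) := fun j =>
    Polynomial.eq_C_of_natDegree_eq_zero
      (Polynomial.natDegree_eq_zero_of_derivative_eq_zero (hdz j))
  have hccj : ∀ j : Fin (N+1), (u (j+1)).coeff 0 = (u j).coeff 0 := by
    intro j
    have h := hjumps j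
    simp only [hMdef, hLdef] at h
    rw [hC (j+1), hC j] at h
    simpa using h
  have hcc0 : ∀ j : Fin (N+1), (u j).coeff 0 = (u 0).coeff 0 :=
    fin_const (fun j => (u j).coeff 0) hccj
  -- mean zero forces the constant to vanish
  have hlen : xs 0 < xs (N+1) := hxs (Nat.succ_pos N)
  have hmean2 : ip N xs u (fun _ => 1) = (xs (N+1) - xs 0) * (u 0).coeff 0 := by
    unfold ip
    have : ∀ j : Fin (N+1), (∫ x in (xs j.val)..(xs (j.val + 1)),
        (u j).eval x * (Polynomial.eval x (1 : Polynomial ℝ)))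
        = (xs (j.val + 1) - xs j.val) * (u 0).coeff 0 := by
      intro j
      have hcong : (∫ x in (xs j.val)..(xs (j.val + 1)),
          (u j).eval x * (Polynomial.eval x (1 : Polynomial ℝ)))
          = ∫ _x in (xs j.val)..(xs (j.val + 1)), (u 0).coeff 0 := by
        apply intervalIntegral.integral_congr
        intro x _
        rw [hC j]
        simpa using hcc0 j
      rw [hcong, intervalIntegral.integral_const, smul_eq_mul]
    rw [Finset.sum_congr rfl (fun j _ => this j), ← Finset.sum_mul, mesh_sum]
  rw [hmean2] at hmean
  have hc0 : (u 0).coeff 0 = 0 := by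
    rcases mul_eq_zero.mp hmean with h | h
    · linarith
    · exact h
  intro j
  rw [hC j, hcc0 j, hc0, map_zero]

lemma ip_one_one (N : ℕ) (xs : ℕ → ℝ) :
    ip N xs (fun _ => 1) (fun _ => 1) = xs (N+1) - xs 0 := by
  unfold ip
  rw [← mesh_sum N xs]
  apply Finset.sum_congr rfl
  intro j _
  simp

/-- One step of the inductive approximation lemma for composed inverse DG derivative
operators. Here `Pdw = Π₀ ∂ₓ w`, `pw = Π_θ w` with the defining property
`D_{h,θ}(Π_θ w - mean(Π_θ w)) = Π₀ ∂ₓ w`, and `q = D_{h,θ}⁻¹ Π₀ ∂ₓ w` is the unique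
mean-zero solution of `D_{h,θ} q = Π₀ ∂ₓ w`. Then `q = Π_θ w - mean(Π_θ w)` and
`‖w - q‖ ≤ 2 ‖w - Π_θ w‖`. -/
theorem dg_inverse_approx (k N : ℕ) (xs : ℕ → ℝ) (hxs : StrictMono xs)
    (θ : ℝ) (hθ : θ ≠ 1/2)
    (w : ℝ → ℝ) (hw : ContDiff ℝ (⊤ : ℕ∞) w)
    (hper : Function.Periodic w (xs (N+1) - xs 0))
    (hwmean : ∫ x in (xs 0)..(xs (N+1)), w x = 0)
    (Pdw pw q : Fin (N+1) → Polynomial ℝ)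
    (hPdw : memVh k N Pdw)
    (hPdwdef : ∀ v, memVh k N v → ip N xs Pdw v = ipf N xs (deriv w) v)
    (hpw : memVh k N pw)
    (hpwdef : DGform k N xs θ (fun j => pw j - Polynomial.C (meanOf N xs pw)) Pdw)
    (hq : memVh k N q) (hq0 : ip N xs q (fun _ => 1) = 0)
    (hqdef : DGform k N xs θ q Pdw) :
    q = (fun j => pw j - Polynomial.C (meanOf N xs pw)) ∧
    errNorm N xs w q ≤ 2 * errNorm N xs w pw := by
  have hlen : xs 0 < xs (N+1) := hxs (Nat.succ_pos N)
  set c : ℝ := meanOf N xs pw with hcdef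
  have hippw : ip N xs pw (fun _ => 1) = c * (xs (N+1) - xs 0) := by
    rw [hcdef, meanOf, ip_one_one, div_mul_cancel₀]
    exact ne_of_gt (by linarith)
  set u : Fin (N+1) → Polynomial ℝ := fun j => q j - (pw j - Polynomial.C c)
    with hudef
  have hu : memVh k N u := by
    intro j
    refine le_trans (Polynomial.natDegree_sub_le _ _) (max_le (hq j) ?_)
    refine le_trans (Polynomial.natDegree_sub_le _ _) (max_le (hpw j) ?_)
    simp
  have hmean_u : ip N xs u (fun _ => 1) = 0 := by
    have hcell : ∀ j : Fin (N+1),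
        (∫ x in (xs j.val)..(xs (j.val + 1)),
            (u j).eval x * Polynomial.eval x (1 : Polynomial ℝ))
        = (∫ x in (xs j.val)..(xs (j.val + 1)),
            (q j).eval x * Polynomial.eval x (1 : Polynomial ℝ))
          - (∫ x in (xs j.val)..(xs (j.val + 1)),
            (pw j).eval x * Polynomial.eval x (1 : Polynomial ℝ))
          + (xs (j.val + 1) - xs j.val) * c := by
      intro j
      have h1 : (∫ x in (xs j.val)..(xs (j.val + 1)),
          (u j).eval x * Polynomial.eval x (1 : Polynomial ℝ))
          = ∫ x in (xs j.val)..(xs (j.val + 1)),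
            (((q j).eval x * Polynomial.eval x (1 : Polynomial ℝ))
              - ((pw j).eval x * Polynomial.eval x (1 : Polynomial ℝ))) + c := by
        apply intervalIntegral.integral_congr
        intro x _
        simp only [hudef, Polynomial.eval_sub, Polynomial.eval_C,
          Polynomial.eval_one]
        ring
      rw [h1, intervalIntegral.integral_add ((polyII _ _ _ _).sub (polyII _ _ _ _))
          (intervalIntegrable_const),
        intervalIntegral.integral_sub (polyII _ _ _ _) (polyII _ _ _ _),
        intervalIntegral.integral_const, smul_eq_mul]
    have : ip N xs u (fun _ => 1)
        = ip N xs q (fun _ => 1) - ip N xs pw (fun _ => 1)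
          + (xs (N+1) - xs 0) * c := by
      unfold ip
      rw [Finset.sum_congr rfl (fun j _ => hcell j), Finset.sum_add_distrib,
        Finset.sum_sub_distrib, ← Finset.sum_mul, mesh_sum]
    rw [this, hq0, hippw]
    ring
  have hB : ∀ v, memVh k N v →
      (∑ j : Fin (N+1), ∫ x in (xs j.val)..(xs (j.val + 1)),
          (u j).eval x * ((v j).derivative.eval x))
        + (∑ j : Fin (N+1), flux N xs θ u j * jump N xs v j) = 0 := by
    intro v hv
    have h1 := hqdef v hv
    have h2 := hpwdef v hv
    beta_reduce at h2
    have hI : (∑ j : Fin (N+1), ∫ x in (xs j.val)..(xs (j.val + 1)),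
        (u j).eval x * ((v j).derivative.eval x))
        = (∑ j : Fin (N+1), ∫ x in (xs j.val)..(xs (j.val + 1)),
            (q j).eval x * ((v j).derivative.eval x))
          - ∑ j : Fin (N+1), ∫ x in (xs j.val)..(xs (j.val + 1)),
            (pw j - Polynomial.C c).eval x * ((v j).derivative.eval x) := by
      rw [← Finset.sum_sub_distrib]
      apply Finset.sum_congr rfl
      intro j _
      rw [← intervalIntegral.integral_sub (polyII _ _ _ _) (polyII _ _ _ _)]
      apply intervalIntegral.integral_congr
      intro x _
      simp only [hudef, Polynomial.eval_sub, Polynomial.eval_C]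
      ring
    have hF : (∑ j : Fin (N+1), flux N xs θ u j * jump N xs v j)
        = (∑ j : Fin (N+1), flux N xs θ q j * jump N xs v j)
          - ∑ j : Fin (N+1),
              flux N xs θ (fun j => pw j - Polynomial.C c) j * jump N xs v j := by
      rw [← Finset.sum_sub_distrib]
      apply Finset.sum_congr rfl
      intro j _
      have : flux N xs θ u j
          = flux N xs θ q j - flux N xs θ (fun j => pw j - Polynomial.C c) j := by
        simp only [flux, leftT, rightT, hudef, Polynomial.eval_sub,
          Polynomial.eval_C]
        ring
      rw [this, sub_mul]
    rw [hI, hF]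
    linarith [h1.symm.trans h2]
  have hker := dg_kernel k N xs hxs θ hθ u hu hmean_u hB
  have hqe : q = (fun j => pw j - Polynomial.C c) := by
    funext j
    have h := hker j
    rw [hudef] at h
    exact sub_eq_zero.mp h
  refine ⟨hqe, ?_⟩
  -- norm estimate
  rw [hqe]
  have hwc : Continuous w := hw.continuous
  have hwint : (∑ j : Fin (N+1), ∫ x in (xs j.val)..(xs (j.val + 1)), w x) = 0 := by
    rw [Fin.sum_univ_eq_sum_range (fun i => ∫ x in (xs i)..(xs (i+1)), w x) (N+1),
      intervalIntegral.sum_integral_adjacent_intervals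
        (fun i _ => hwc.intervalIntegrable _ _)]
    exact hwmean
  have hpwint : (∑ j : Fin (N+1), ∫ x in (xs j.val)..(xs (j.val + 1)),
      (pw j).eval x) = c * (xs (N+1) - xs 0) := by
    rw [← hippw]
    unfold ip
    apply Finset.sum_congr rfl
    intro j _
    apply intervalIntegral.integral_congr
    intro x _
    simp
  have hB2 : (∑ j : Fin (N+1), ∫ x in (xs j.val)..(xs (j.val + 1)),
      (w x - (pw j).eval x)) = -(c * (xs (N+1) - xs 0)) := by
    have : ∀ j : Fin (N+1), (∫ x in (xs j.val)..(xs (j.val + 1)),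
        (w x - (pw j).eval x))
        = (∫ x in (xs j.val)..(xs (j.val + 1)), w x)
          - ∫ x in (xs j.val)..(xs (j.val + 1)), (pw j).eval x := fun j =>
      intervalIntegral.integral_sub (hwc.intervalIntegrable _ _)
        ((pw j).continuous.intervalIntegrable _ _)
    rw [Finset.sum_congr rfl (fun j _ => this j), Finset.sum_sub_distrib,
      hwint, hpwint]
    ring
  have hcell2 : ∀ j : Fin (N+1),
      (∫ x in (xs j.val)..(xs (j.val + 1)), (w x - (pw j - Polynomial.C c).eval x) ^ 2)
      = (∫ x in (xs j.val)..(xs (j.val + 1)), (w x - (pw j).eval x) ^ 2)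
        + 2 * c * (∫ x in (xs j.val)..(xs (j.val + 1)), (w x - (pw j).eval x))
        + (xs (j.val + 1) - xs j.val) * c ^ 2 := by
    intro j
    have hc1 : Continuous fun x => (w x - (pw j).eval x) ^ 2 :=
      (hwc.sub (pw j).continuous).pow 2
    have hc2 : Continuous fun x => 2 * c * (w x - (pw j).eval x) :=
      continuous_const.mul (hwc.sub (pw j).continuous)
    have h1 : (∫ x in (xs j.val)..(xs (j.val + 1)),
        (w x - (pw j - Polynomial.C c).eval x) ^ 2)
        = ∫ x in (xs j.val)..(xs (j.val + 1)),
            (((w x - (pw j).eval x) ^ 2 + 2 * c * (w x - (pw j).eval x)) + c ^ 2) := by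
      apply intervalIntegral.integral_congr
      intro x _
      simp only [Polynomial.eval_sub, Polynomial.eval_C]
      ring
    rw [h1, intervalIntegral.integral_add
        ((hc1.intervalIntegrable _ _).add (hc2.intervalIntegrable _ _))
        intervalIntegrable_const,
      intervalIntegral.integral_add (hc1.intervalIntegrable _ _)
        (hc2.intervalIntegrable _ _),
      intervalIntegral.integral_const_mul, intervalIntegral.integral_const,
      smul_eq_mul]
  unfold errNorm
  have htot : (∑ j : Fin (N+1), ∫ x in (xs j.val)..(xs (j.val + 1)),
      (w x - (pw j - Polynomial.C c).eval x) ^ 2)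
      = (∑ j : Fin (N+1), ∫ x in (xs j.val)..(xs (j.val + 1)),
          (w x - (pw j).eval x) ^ 2)
        - c ^ 2 * (xs (N+1) - xs 0) := by
    rw [Finset.sum_congr rfl (fun j _ => hcell2 j), Finset.sum_add_distrib,
      Finset.sum_add_distrib, ← Finset.mul_sum, hB2, ← Finset.sum_mul, mesh_sum]
    ring
  rw [htot]
  have hA : (∑ j : Fin (N+1), ∫ x in (xs j.val)..(xs (j.val + 1)),
      (w x - (pw j).eval x) ^ 2) - c ^ 2 * (xs (N+1) - xs 0)
      ≤ ∑ j : Fin (N+1), ∫ x in (xs j.val)..(xs (j.val + 1)),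
          (w x - (pw j).eval x) ^ 2 := by
    nlinarith [sq_nonneg c]
  calc Real.sqrt ((∑ j : Fin (N+1), ∫ x in (xs j.val)..(xs (j.val + 1)),
          (w x - (pw j).eval x) ^ 2) - c ^ 2 * (xs (N+1) - xs 0))
      ≤ Real.sqrt (∑ j : Fin (N+1), ∫ x in (xs j.val)..(xs (j.val + 1)),
          (w x - (pw j).eval x) ^ 2) := Real.sqrt_le_sqrt hA
    _ ≤ 2 * Real.sqrt (∑ j : Fin (N+1), ∫ x in (xs j.val)..(xs (j.val + 1)),
          (w x - (pw j).eval x) ^ 2) := by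
        nlinarith [Real.sqrt_nonneg (∑ j : Fin (N+1),
          ∫ x in (xs j.val)..(xs (j.val + 1)), (w x - (pw j).eval x) ^ 2)]
end

section
/- Let $H$ be a real Hilbert space, $L_h$ bounded linear with $\langle L_h v, v \rangle \le \mu \|v\|^2$ ($\mu \ge 0$) and $\tau\|L_h\| \le \lambda < 1$. Let $u_h(t) = e^{t L_h} u_h(0)$ and $u_h^{n+1} = R_s(\tau L_h) u_h^n$ where $R_s(z) = \sum_{i=0}^{s}\alpha_i z^i$ with $\alpha_i = 1/i!$ for $i \le p$. Suppose $\|R_s(\tau L_h)\| \le 1 + \mu_h \tau$, $u_h^0 = u_h(0)$, and $\|L_h^{p+1} u_h(0)\| \le C_\Pi$. Then for $t^n = n\tau$: $\|u_h(t^n) - u_h^n\| \le e^{\mu_h t^n} \cdot C_\Pi \left(e + \sum_{i=p+1}^{s} |\alpha_i|\right) \sigma(\mu_h, t^n)\, e^{\mu t^n}\, \tau^p$, where $\sigma(\mu, t) = (e^{\mu t}-1)/\mu$ for $\mu > 0$ and $\sigma(0,t) = t$. -/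
/-!
The error `eₙ = u(tⁿ) - uⁿ` satisfies `eₙ₊₁ = R eₙ + wₙ` with local error
`wₙ = (e^{τL} - R) u(tⁿ)`, so `‖R‖ ≤ 1 + μ_h τ` gives `‖eₙ‖ ≤ max ‖wₖ‖ · ∑ⱼ (1 + μ_h τ)ʲ`,
and `τ ∑_{j<n} (1 + μ_h τ)ʲ ≤ σ(μ_h, tⁿ)`. Since `R` agrees with the exponential series up to
order `p`, `wₙ` is the exponential tail minus the extra stages `i ∈ (p, s]`; when `τ‖L‖ ≤ 1`
every such term is bounded by `τ^{p+1} ‖L^{p+1} u(tⁿ)‖`. Finally `L^{p+1}` commutes with the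
semigroup, and semiboundedness makes `e^{-2μt} ‖u(t)‖²` nonincreasing along any trajectory, so
`‖L^{p+1} u(t)‖ ≤ e^{μt} ‖L^{p+1} u(0)‖`.
-/

open scoped RealInnerProductSpace

open Finset
open scoped Nat

theorem exp_add_smul {𝔸 : Type*} [NormedRing 𝔸] [NormedAlgebra ℝ 𝔸] [CompleteSpace 𝔸]
    (x : 𝔸) (s t : ℝ) :
    NormedSpace.exp ((s + t) • x) = NormedSpace.exp (s • x) * NormedSpace.exp (t • x) := by
  have hball (r : ℝ) : r • x ∈ Metric.eball 0 (NormedSpace.expSeries ℝ 𝔸).radius := by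
    simp [NormedSpace.expSeries_radius_eq_top]
  rw [add_smul]
  exact NormedSpace.exp_add_of_commute_of_mem_ball
    (((Commute.refl x).smul_left s).smul_right t) (hball s) (hball t)

theorem norm_pow_apply_le_of_norm_le_one {𝕜 E : Type*} [NontriviallyNormedField 𝕜]
    [NormedAddCommGroup E] [NormedSpace 𝕜 E] {x : E →L[𝕜] E} (hx : ‖x‖ ≤ 1) {m i : ℕ}
    (hmi : m ≤ i) (v : E) : ‖(x ^ i) v‖ ≤ ‖(x ^ m) v‖ := by
  induction i, hmi using Nat.le_induction with
  | base => rfl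
  | succ i _ ih =>
    rw [pow_succ', mul_apply_eq_comp]
    exact (x.le_opNorm _).trans (mul_le_of_le_one_left (norm_nonneg _) hx) |>.trans ih

theorem norm_exp_sub_sum_apply_le {E : Type*} [NormedAddCommGroup E] [NormedSpace ℝ E]
    [CompleteSpace E] {x : E →L[ℝ] E} (hx : ‖x‖ ≤ 1) {p s : ℕ} (hs : p ≤ s) {α : ℕ → ℝ}
    (hα : ∀ i ≤ p, α i = 1 / (i ! : ℝ)) (v : E) :
    ‖NormedSpace.exp x v - (∑ i ∈ range (s + 1), α i • x ^ i) v‖ ≤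
      (Real.exp 1 + ∑ i ∈ Icc (p + 1) s, |α i|) * ‖(x ^ (p + 1)) v‖ := by
  set M := ‖(x ^ (p + 1)) v‖
  have hexp : HasSum (fun i => (i !⁻¹ : ℝ) • (x ^ i) v) (NormedSpace.exp x v) :=
    (NormedSpace.exp_series_hasSum_exp' (𝕂 := ℝ) x).mapL (ContinuousLinearMap.apply ℝ E v)
  have he : HasSum (fun i => (i !⁻¹ : ℝ)) (Real.exp 1) := by
    simpa [Real.exp_eq_exp_ℝ] using NormedSpace.exp_series_hasSum_exp' (𝕂 := ℝ) (1 : ℝ)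
  set T := NormedSpace.exp x v - ∑ i ∈ range (p + 1), (i !⁻¹ : ℝ) • (x ^ i) v
  have hT : ‖T‖ ≤ Real.exp 1 * M := by
    refine ((hasSum_nat_add_iff' (p + 1)).2 hexp |>.norm_le_of_bounded
      (((hasSum_nat_add_iff' (p + 1)).2 he).mul_right M) fun j => ?_).trans ?_
    · rw [norm_smul, Real.norm_of_nonneg (by positivity)]
      gcongr
      exact norm_pow_apply_le_of_norm_le_one hx (by omega) v
    · gcongr
      exact sub_le_self _ (by positivity)
  have hsplit : (∑ i ∈ range (s + 1), α i • x ^ i) v =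
      ∑ i ∈ range (p + 1), (i !⁻¹ : ℝ) • (x ^ i) v + ∑ i ∈ Icc (p + 1) s, α i • (x ^ i) v := by
    rw [_root_.sum_apply, ← sum_range_add_sum_Ico _ (by omega : p + 1 ≤ s + 1),
      Finset.Ico_add_one_right_eq_Icc]
    congr 1
    refine sum_congr rfl fun i hi => ?_
    rw [hα i (by simpa [Nat.lt_succ_iff] using hi), one_div]; rfl
  have hB : ‖∑ i ∈ Icc (p + 1) s, α i • (x ^ i) v‖ ≤ (∑ i ∈ Icc (p + 1) s, |α i|) * M := by
    rw [sum_mul]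
    refine (norm_sum_le _ _).trans (sum_le_sum fun i hi => ?_)
    rw [norm_smul, Real.norm_eq_abs]
    gcongr
    exact norm_pow_apply_le_of_norm_le_one hx (mem_Icc.1 hi).1 v
  rw [hsplit, ← sub_sub, add_mul]
  exact (norm_sub_le _ _).trans (add_le_add hT hB)

theorem norm_le_exp_mul_of_hasDerivAt_of_inner_le {H : Type*} [NormedAddCommGroup H]
    [InnerProductSpace ℝ H] {A : H → H} {μ : ℝ} (hA : ∀ v, ⟪A v, v⟫ ≤ μ * ‖v‖ ^ 2)
    {u : ℝ → H} (hu : ∀ s, HasDerivAt u (A (u s)) s) {t : ℝ} (ht : 0 ≤ t) :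
    ‖u t‖ ≤ Real.exp (μ * t) * ‖u 0‖ := by
  set f : ℝ → ℝ := fun r => Real.exp (-2 * μ * r) * ‖u r‖ ^ 2
  have hf : ∀ r, HasDerivAt f
      (Real.exp (-2 * μ * r) * (2 * (⟪A (u r), u r⟫ - μ * ‖u r‖ ^ 2))) r := by
    intro r
    refine ((((hasDerivAt_id r).const_mul (-2 * μ)).exp).mul (hu r).norm_sq).congr_deriv ?_
    rw [real_inner_comm]; simp only [id, mul_one]; ring
  have hanti : Antitone f := antitone_of_deriv_nonpos (fun r => (hf r).differentiableAt)
    fun r => by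
      rw [(hf r).deriv]
      exact mul_nonpos_of_nonneg_of_nonpos (Real.exp_pos _).le (by linarith [hA (u r)])
  have hsq : ‖u t‖ ^ 2 ≤ (Real.exp (μ * t) * ‖u 0‖) ^ 2 :=
    calc ‖u t‖ ^ 2 = Real.exp (2 * μ * t) * f t := by
          rw [← mul_assoc, ← Real.exp_add, show 2 * μ * t + -2 * μ * t = 0 by ring, Real.exp_zero,
            one_mul]
      _ ≤ Real.exp (2 * μ * t) * f 0 := by gcongr; exact hanti ht
      _ = (Real.exp (μ * t) * ‖u 0‖) ^ 2 := by
          simp only [f, mul_zero, Real.exp_zero, one_mul, mul_pow, ← Real.exp_nat_mul]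
          ring_nf
  exact (pow_le_pow_iff_left₀ (norm_nonneg _) (by positivity) two_ne_zero).1 hsq

section Semigroup

variable {H : Type*} [NormedAddCommGroup H] [InnerProductSpace ℝ H] [CompleteSpace H]

theorem norm_exp_smul_apply_le_of_inner_le (L : H →L[ℝ] H) {μ : ℝ}
    (hL : ∀ v, ⟪L v, v⟫ ≤ μ * ‖v‖ ^ 2) {t : ℝ} (ht : 0 ≤ t) (v : H) :
    ‖NormedSpace.exp (t • L) v‖ ≤ Real.exp (μ * t) * ‖v‖ := by
  have hu (s : ℝ) : HasDerivAt (fun r : ℝ => NormedSpace.exp (r • L) v)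
      (L (NormedSpace.exp (s • L) v)) s := by
    simpa using (hasDerivAt_exp_smul_const' (𝕂 := ℝ) L s).clm_apply (hasDerivAt_const s v)
  simpa using norm_le_exp_mul_of_hasDerivAt_of_inner_le hL hu ht

theorem norm_pow_apply_exp_smul_apply_le_of_inner_le (L : H →L[ℝ] H) {μ : ℝ}
    (hL : ∀ v, ⟪L v, v⟫ ≤ μ * ‖v‖ ^ 2) {t : ℝ} (ht : 0 ≤ t) (k : ℕ) (v : H) :
    ‖(L ^ k) (NormedSpace.exp (t • L) v)‖ ≤ Real.exp (μ * t) * ‖(L ^ k) v‖ := by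
  have hcomm : Commute (L ^ k) (NormedSpace.exp (t • L)) :=
    (((Commute.refl L).smul_right t).pow_left k).exp_right
  rw [← mul_apply_eq_comp, hcomm.eq, mul_apply_eq_comp]
  exact norm_exp_smul_apply_le_of_inner_le L hL ht _

theorem norm_exp_add_smul_sub_sum_apply_le (L : H →L[ℝ] H) {μ : ℝ}
    (hL : ∀ v, ⟪L v, v⟫ ≤ μ * ‖v‖ ^ 2) {τ t : ℝ} (hτ : 0 ≤ τ) (hτL : τ * ‖L‖ ≤ 1) (ht : 0 ≤ t)
    {p s : ℕ} (hs : p ≤ s) {α : ℕ → ℝ} (hα : ∀ i ≤ p, α i = 1 / (i ! : ℝ)) (v : H) :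
    ‖NormedSpace.exp ((τ + t) • L) v -
        (∑ i ∈ range (s + 1), α i • (τ • L) ^ i) (NormedSpace.exp (t • L) v)‖ ≤
      (Real.exp 1 + ∑ i ∈ Icc (p + 1) s, |α i|) * τ ^ (p + 1) *
        (Real.exp (μ * t) * ‖(L ^ (p + 1)) v‖) := by
  have hx : ‖τ • L‖ ≤ 1 := by rwa [norm_smul, Real.norm_of_nonneg hτ]
  rw [show NormedSpace.exp ((τ + t) • L) = NormedSpace.exp (τ • L) * NormedSpace.exp (t • L) from
    exp_add_smul L τ t, mul_apply_eq_comp]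
  refine (norm_exp_sub_sum_apply_le hx hs hα _).trans ?_
  rw [smul_pow, smul_apply, norm_smul, Real.norm_of_nonneg (by positivity), ← mul_assoc]
  gcongr
  exact norm_pow_apply_exp_smul_apply_le_of_inner_le L hL ht (p + 1) v

end Semigroup

theorem norm_sub_le_mul_geom_sum_of_local_error {𝕜 E : Type*} [NontriviallyNormedField 𝕜]
    [NormedAddCommGroup E] [NormedSpace 𝕜 E] {R : E →L[𝕜] E} {q δ : ℝ} (hR : ‖R‖ ≤ q)
    {u w : ℕ → E} (h0 : u 0 = w 0) (hw : ∀ k, w (k + 1) = R (w k)) {n : ℕ}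
    (hloc : ∀ k < n, ‖u (k + 1) - R (u k)‖ ≤ δ) :
    ‖u n - w n‖ ≤ δ * ∑ j ∈ range n, q ^ j := by
  induction n with
  | zero => simp [h0]
  | succ n ih =>
    have hq : 0 ≤ q := (norm_nonneg R).trans hR
    have ih' := ih fun k hk => hloc k (by omega)
    calc ‖u (n + 1) - w (n + 1)‖ = ‖(u (n + 1) - R (u n)) + R (u n - w n)‖ := by
          rw [hw, map_sub, sub_add_sub_cancel]
      _ ≤ δ + q * (δ * ∑ j ∈ range n, q ^ j) :=
          (norm_add_le _ _).trans (add_le_add (hloc n n.lt_succ_self)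
            ((R.le_opNorm _).trans (mul_le_mul hR ih' (norm_nonneg _) hq)))
      _ = δ * ∑ j ∈ range (n + 1), q ^ j := by rw [geom_sum_succ]; ring

theorem mul_geom_sum_le_sigma {a τ : ℝ} (ha : 0 ≤ a) (hτ : 0 ≤ τ) (n : ℕ) :
    τ * ∑ j ∈ range n, (1 + a * τ) ^ j ≤ sigma a (n * τ) := by
  rcases ha.eq_or_lt with rfl | ha
  · simp [sigma, mul_comm]
  rw [sigma, if_pos ha, le_div_iff₀ ha]
  calc (τ * ∑ j ∈ range n, (1 + a * τ) ^ j) * a = (1 + a * τ) ^ n - 1 := by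
        linear_combination geom_sum_mul (1 + a * τ) n
    _ ≤ Real.exp (a * τ) ^ n - 1 := by
        gcongr
        linarith [Real.add_one_le_exp (a * τ)]
    _ = Real.exp (a * (n * τ)) - 1 := by rw [← Real.exp_nat_mul]; ring_nf

/-- Error estimate for the explicit Runge–Kutta time integrator compared with the
exact semigroup solution `u_h(t) = e^{t L_h} u_h(0)` of `∂ₜ u_h = L_h u_h`. -/
theorem rk_time_integrator_error {H : Type*} [NormedAddCommGroup H]
    [InnerProductSpace ℝ H] [CompleteSpace H]
    (Lh : H →L[ℝ] H) (μ μh τ lam CPi : ℝ) (p s : ℕ) (α : ℕ → ℝ)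
    (hμ : 0 ≤ μ) (hμh : 0 ≤ μh) (hτ : 0 < τ)
    (hsb : ∀ v : H, ⟪Lh v, v⟫ ≤ μ * ‖v‖ ^ 2)
    (hlam : τ * ‖Lh‖ ≤ lam) (hlam1 : lam < 1)
    (hα : ∀ i ≤ p, α i = 1 / (i.factorial : ℝ)) (hs : p ≤ s)
    (R : H →L[ℝ] H) (hR : R = ∑ i ∈ Finset.range (s+1), α i • (τ • Lh) ^ i)
    (hRn : ‖R‖ ≤ 1 + μh * τ)
    (u0 : H) (hC : ‖(Lh ^ (p+1)) u0‖ ≤ CPi)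
    (un : ℕ → H) (h0 : un 0 = u0) (hrec : ∀ n, un (n+1) = R (un n)) :
    ∀ n : ℕ, ‖NormedSpace.exp ((n * τ : ℝ) • Lh) u0 - un n‖ ≤
      Real.exp (μh * (n * τ)) * (CPi * (Real.exp 1 + ∑ i ∈ Finset.Icc (p+1) s, |α i|) *
        sigma μh (n * τ) * Real.exp (μ * (n * τ)) * τ ^ p) := by
  intro n
  set K := Real.exp 1 + ∑ i ∈ Icc (p + 1) s, |α i|
  have hCPi : 0 ≤ CPi := (norm_nonneg _).trans hC
  have hloc : ∀ k < n, ‖NormedSpace.exp (((k + 1 : ℕ) * τ : ℝ) • Lh) u0 -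
      R (NormedSpace.exp ((k * τ : ℝ) • Lh) u0)‖ ≤
        K * τ ^ (p + 1) * (Real.exp (μ * (n * τ)) * CPi) := by
    intro k hk
    rw [hR, show ((k + 1 : ℕ) * τ : ℝ) = τ + k * τ by push_cast; ring]
    refine (norm_exp_add_smul_sub_sum_apply_le Lh hsb hτ.le (hlam.trans hlam1.le) (by positivity)
      hs hα u0).trans ?_
    gcongr
  have hglob := norm_sub_le_mul_geom_sum_of_local_error hRn
    (u := fun k : ℕ => NormedSpace.exp ((k * τ : ℝ) • Lh) u0) (by simpa using h0.symm) hrec hloc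
  have hσ := mul_geom_sum_le_sigma hμh hτ.le n
  have hσ0 : 0 ≤ sigma μh (n * τ) := (by positivity : (0 : ℝ) ≤ τ * _).trans hσ
  calc _ ≤ K * τ ^ (p + 1) * (Real.exp (μ * (n * τ)) * CPi) * ∑ j ∈ range n, (1 + μh * τ) ^ j :=
        hglob
    _ = CPi * K * (τ * ∑ j ∈ range n, (1 + μh * τ) ^ j) * Real.exp (μ * (n * τ)) * τ ^ p := by ring
    _ ≤ CPi * K * sigma μh (n * τ) * Real.exp (μ * (n * τ)) * τ ^ p := by gcongr
    _ ≤ _ := le_mul_of_one_le_left (by positivity) (Real.one_le_exp (by positivity))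
end
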